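/- Suppose K ranks with extended binary labels y_n^(k) = 1{y_n > k}, and the loss L(W, b) = −Σ_{n=1}^N Σ_{k=1}^{K−1} λ^(k) [ y_n^(k) log σ(g_n(W) + b_k) + (1 − y_n^(k)) log(1 − σ(g_n(W) + b_k)) ] with all λ^(k) > 0. Assume that for every pair of adjacent tasks k, k+1 there exists an example n with y_n = k+1 (so y_n^(k) = 1 and y_n^(k+1) = 0). Then any minimizer (W*, b*) of L satisfies b*₁ ≥ b*₂ ≥ ... ≥ b*_{K−1}. -/

import Mathlib

/-!
At fixed weights the loss separates into one cross-entropy per task, so each optimal bias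
minimizes its own task loss. Going from task `k` to task `k + 1` only flips the labels of the
examples of rank `k + 2`, and since `log (1 - σ z) = log σ z - z` this adds the strictly
increasing function `c ↦ ∑_{y n = k + 2} (g n + c)` to the task loss. Adding a strictly
increasing function can only move a minimizer to the left, hence `b* (k + 1) ≤ b* k`.
-/

noncomputable def sigmoid (z : ℝ) : ℝ := 1 / (1 + Real.exp (-z))

noncomputable def coralLoss {W : Type} (N m : ℕ) (g : W → Fin N → ℝ)
    (lam : Fin m → ℝ) (y : Fin N → ℕ) (w : W) (b : Fin m → ℝ) : ℝ :=
  -∑ n, ∑ k, lam k *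
    ((if (k : ℕ) + 1 < y n then (1 : ℝ) else 0) * Real.log (sigmoid (g w n + b k)) +
      (1 - (if (k : ℕ) + 1 < y n then (1 : ℝ) else 0)) * Real.log (1 - sigmoid (g w n + b k)))

open Finset

lemma sigmoid_pos (z : ℝ) : 0 < sigmoid z := by
  unfold sigmoid; positivity

lemma one_sub_sigmoid (z : ℝ) : 1 - sigmoid z = Real.exp (-z) * sigmoid z := by
  unfold sigmoid
  field_simp
  ring

lemma log_one_sub_sigmoid (z : ℝ) : Real.log (1 - sigmoid z) = Real.log (sigmoid z) - z := by
  rw [one_sub_sigmoid, Real.log_mul (Real.exp_ne_zero _) (sigmoid_pos z).ne', Real.log_exp]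
  ring

lemma minimizer_add_strictMono_le {α β : Type*} [LinearOrder α] [AddCommMonoid β]
    [PartialOrder β] [IsOrderedCancelAddMonoid β] {f h : α → β} {a b : α}
    (hh : StrictMono h) (ha : ∀ c, f a ≤ f c) (hb : ∀ c, f b + h b ≤ f c + h c) : b ≤ a := by
  by_contra! hab
  exact (add_lt_add_of_le_of_lt (ha b) (hh hab)).not_ge (hb a)

lemma apply_le_of_sum_le {ι α β : Type*} [Fintype ι] [DecidableEq ι] [AddCommMonoid β]
    [PartialOrder β] [IsOrderedCancelAddMonoid β] {F : ι → α → β} {b : ι → α}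
    (hmin : ∀ b' : ι → α, ∑ k, F k (b k) ≤ ∑ k, F k (b' k)) (k : ι) (c : α) :
    F k (b k) ≤ F k c := by
  have h := hmin (Function.update b k c)
  have hrest : ∑ j ∈ univ.erase k, F j (Function.update b k c j) =
      ∑ j ∈ univ.erase k, F j (b j) :=
    sum_congr rfl fun j hj => by rw [Function.update_of_ne (ne_of_mem_erase hj)]
  rw [← add_sum_erase _ _ (mem_univ k), ← add_sum_erase _ _ (mem_univ k), hrest,
    Function.update_self] at h
  exact le_of_add_le_add_right h

/-- Tasks are indexed from `0`: the label of example `n` in task `k` is `1{y n > k + 1}`. -/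
noncomputable def taskLoss {N : ℕ} (g : Fin N → ℝ) (y : Fin N → ℕ) (k : ℕ) (c : ℝ) : ℝ :=
  -∑ n, ((if k + 1 < y n then (1 : ℝ) else 0) * Real.log (sigmoid (g n + c)) +
      (1 - (if k + 1 < y n then (1 : ℝ) else 0)) * Real.log (1 - sigmoid (g n + c)))

lemma coralLoss_eq_sum_taskLoss {W : Type} (N m : ℕ) (g : W → Fin N → ℝ) (lam : Fin m → ℝ)
    (y : Fin N → ℕ) (w : W) (b : Fin m → ℝ) :
    coralLoss N m g lam y w b = ∑ k, lam k * taskLoss (g w) y k (b k) := by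
  simp only [coralLoss, taskLoss, sum_comm (γ := Fin N), mul_neg, sum_neg_distrib, mul_sum]

lemma taskLoss_succ {N : ℕ} (g : Fin N → ℝ) (y : Fin N → ℕ) (k : ℕ) (c : ℝ) :
    taskLoss g y (k + 1) c = taskLoss g y k c + ∑ n with y n = k + 2, (g n + c) := by
  simp only [taskLoss, sum_filter, ← sum_neg_distrib, ← sum_add_distrib]
  refine sum_congr rfl fun n _ => ?_
  rcases lt_trichotomy (y n) (k + 2) with h | h | h
  · simp [show ¬k + 1 < y n by omega, show ¬k + 1 + 1 < y n by omega, h.ne]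
  · simp [h, log_one_sub_sigmoid]
    ring
  · simp [show k + 1 < y n by omega, show k + 1 + 1 < y n by omega, h.ne']

lemma strictMono_sum_filter_add {N : ℕ} (g : Fin N → ℝ) (p : Fin N → Prop) [DecidablePred p]
    (hp : ∃ n, p n) : StrictMono fun c : ℝ => ∑ n with p n, (g n + c) := by
  obtain ⟨n, hn⟩ := hp
  exact fun c d hcd => sum_lt_sum_of_nonempty ⟨n, by simpa using hn⟩ fun _ _ => by linarith

lemma minimizer_taskLoss_succ_le {N : ℕ} (g : Fin N → ℝ) (y : Fin N → ℕ) (k : ℕ)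
    (hk : ∃ n, y n = k + 2) {a b : ℝ} (ha : ∀ c, taskLoss g y k a ≤ taskLoss g y k c)
    (hb : ∀ c, taskLoss g y (k + 1) b ≤ taskLoss g y (k + 1) c) : b ≤ a := by
  simp only [taskLoss_succ] at hb
  exact minimizer_add_strictMono_le (strictMono_sum_filter_add g _ hk) ha hb

theorem ordered_bias_units_general {W : Type} (N m : ℕ) (g : W → Fin N → ℝ)
    (lam : Fin m → ℝ) (hlam : ∀ k, 0 < lam k)
    (y : Fin N → ℕ)
    (hadj : ∀ i : ℕ, i + 1 < m → ∃ n, y n = i + 2)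
    (wstar : W) (bstar : Fin m → ℝ)
    (hmin : ∀ (w : W) (b : Fin m → ℝ),
      coralLoss N m g lam y wstar bstar ≤ coralLoss N m g lam y w b) :
    Antitone bstar := by
  have htask : ∀ (k : Fin m) c, taskLoss (g wstar) y k (bstar k) ≤ taskLoss (g wstar) y k c := by
    intro k c
    have h := apply_le_of_sum_le (F := fun k c => lam k * taskLoss (g wstar) y k c)
      (fun b => by simpa only [coralLoss_eq_sum_taskLoss] using hmin wstar b) k c
    exact le_of_mul_le_mul_left h (hlam k)
  cases m with
  | zero => exact fun i => i.elim0
  | succ m =>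
    refine Fin.antitone_iff_succ_le.mpr fun i => ?_
    exact minimizer_taskLoss_succ_le (g wstar) y i (hadj i (by omega))
      (htask i.castSucc) (htask i.succ)

theorem ordered_bias_units {W : Type} (N m : ℕ) (g : W → Fin N → ℝ)
    (lam : Fin m → ℝ) (hlam : ∀ k, 0 < lam k)
    (y : Fin N → ℕ) (hy1 : ∀ n, 1 ≤ y n) (hy2 : ∀ n, y n ≤ m + 1)
    (hadj : ∀ i : ℕ, i + 1 < m → ∃ n, y n = i + 2)
    (wstar : W) (bstar : Fin m → ℝ)
    (hmin : ∀ (w : W) (b : Fin m → ℝ),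
      coralLoss N m g lam y wstar bstar ≤ coralLoss N m g lam y w b) :
    Antitone bstar :=
  ordered_bias_units_general N m g lam hlam y hadj wstar bstar hmin
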